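/- Statement A ('every antipodal 2-colouring of E(Q_n) contains a monochromatic geodesic between some pair of antipodal vertices', for all n ≥ 2) holds if and only if statement B ('in every 2-colouring of E(Q_n) there is a geodesic between a pair of antipodal vertices which changes colour at most once', for all n ≥ 2) holds. -/

import Mathlib

open SimpleGraph Finset
open scoped symmDiff

/-- The hypercube `Q_n` on vertex set `{0,1}^n`: two vertices are adjacent iff they
differ in exactly one coordinate. -/
def Q (n : ℕ) : SimpleGraph (Fin n → Bool) where
  Adj x y := hammingDist x y = 1
  symm := ⟨fun x y h => (hammingDist_comm y x).trans h⟩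
  loopless := ⟨fun x h => by simp at h⟩

/-- The coordinate direction of a step from `x` to `y` (for an edge of `Q n`, the unique
coordinate where they differ), as a natural number. -/
def dir {n : ℕ} (x y : Fin n → Bool) : ℕ :=
  (Finset.univ.filter fun i => x i ≠ y i).sup fun i => (i : ℕ)

/-- The list of coordinate directions of the edges of a walk in `Q n`. -/
def dirs {n : ℕ} {u v : Fin n → Bool} (p : (Q n).Walk u v) : List ℕ :=
  p.darts.map fun d => dir d.fst d.snd

/-- A geodesic in `Q n`: a path no two of whose edges lie in the same coordinate
direction. -/
def IsGeodesic {n : ℕ} {u v : Fin n → Bool} (p : (Q n).Walk u v) : Prop :=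
  p.IsPath ∧ (dirs p).Nodup

/-- An increasing geodesic in `Q n`: a path whose successive edge directions strictly
increase. -/
def IsIncGeodesic {n : ℕ} {u v : Fin n → Bool} (p : (Q n).Walk u v) : Prop :=
  p.IsPath ∧ (dirs p).Chain' (· < ·)

/-- `maxInc G x` is the maximum length of an increasing geodesic contained in the
subgraph `G` of `Q n` and ending at the vertex `x`. -/
noncomputable def maxInc {n : ℕ} (G : (Q n).Subgraph) (x : Fin n → Bool) : ℕ :=
  sSup {l | ∃ u, ∃ p : (Q n).Walk u x, p.toSubgraph ≤ G ∧ IsIncGeodesic p ∧ p.length = l}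
/-- The antipodal vertex of `x` in `Q n`: flip every coordinate. -/
def antip {n : ℕ} (x : Fin n → Bool) : Fin n → Bool := fun i => !x i

/-- A 2-colouring of the edges of `Q n` is antipodal if every pair of antipodal edges
receives different colours. -/
def IsAntipodalColouring (n : ℕ) (c : Sym2 (Fin n → Bool) → Bool) : Prop :=
  ∀ x y : Fin n → Bool, (Q n).Adj x y → c s(x, y) ≠ c s(antip x, antip y)

/-- A walk changes colour at most once under `c`: its edge list splits as a block of one
colour followed by a (possibly empty) block of the other colour. -/
def ChangesAtMostOnce {n : ℕ} (c : Sym2 (Fin n → Bool) → Bool) {u v : Fin n → Bool}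
    (p : (Q n).Walk u v) : Prop :=
  ∃ (l₁ l₂ : List (Sym2 (Fin n → Bool))) (b : Bool),
    p.edges = l₁ ++ l₂ ∧ (∀ e ∈ l₁, c e = b) ∧ (∀ e ∈ l₂, c e = !b)

/-- A walk is monochromatic under `c`. -/
def Mono {n : ℕ} (c : Sym2 (Fin n → Bool) → Bool) {u v : Fin n → Bool}
    (p : (Q n).Walk u v) : Prop :=
  ∃ b : Bool, ∀ e ∈ p.edges, c e = b

/-- Statement A: for all `n ≥ 2`, every antipodal 2-colouring of `E(Q n)` contains a
monochromatic geodesic between some pair of antipodal vertices. -/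
def StatementA : Prop :=
  ∀ n : ℕ, 2 ≤ n → ∀ c : Sym2 (Fin n → Bool) → Bool, IsAntipodalColouring n c →
    ∃ (u : Fin n → Bool) (p : (Q n).Walk u (antip u)), IsGeodesic p ∧ Mono c p

/-- Statement B: for all `n ≥ 2`, in every 2-colouring of `E(Q n)` there is a geodesic
between a pair of antipodal vertices which changes colour at most once. -/
def StatementB : Prop :=
  ∀ n : ℕ, 2 ≤ n → ∀ c : Sym2 (Fin n → Bool) → Bool,
    ∃ (u : Fin n → Bool) (p : (Q n).Walk u (antip u)), IsGeodesic p ∧ ChangesAtMostOnce c p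

/-!
B ⇒ A: if an antipodal geodesic `p` from `u` has colour `b` up to a vertex `w` and `!b` after it,
follow `p` from `w` to `antip u` and then the antipodal image of its first part, which ends at
`antip w`; in an antipodal colouring that image has colour `!b` too.

A ⇒ B: extend a colouring `c` of `Q n` to `Q (n + 1)` by `c` on the layer `x n = false` and by
`e ↦ !c (antip e)` on the layer `x n = true`; with a suitable colouring of the edges between the
layers this is antipodal. An antipodal geodesic `P` of `Q (n + 1)` crosses between the layers
exactly once, so if `P` is monochromatic, the antipodal image of the projection of its part in the
upper layer followed by the projection of its part in the lower layer is an antipodal geodesic of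
`Q n` changing colour at most once.
-/

section Hypercube

variable {n : ℕ}

@[simp] lemma antip_antip (x : Fin n → Bool) : antip (antip x) = x :=
  funext fun i => Bool.not_not (x i)

lemma Q_adj_iff {x y : Fin n → Bool} : (Q n).Adj x y ↔ ∃ j, ∀ i, x i ≠ y i ↔ i = j := by
  change (univ.filter fun i => x i ≠ y i).card = 1 ↔ _
  simp [card_eq_one, Finset.ext_iff]

lemma dir_eq_of_forall_ne_iff {x y : Fin n → Bool} {j : Fin n}
    (h : ∀ i, x i ≠ y i ↔ i = j) : dir x y = j := by
  have : (univ.filter fun i => x i ≠ y i) = {j} := by ext i; simp [h i]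
  rw [dir, this, sup_singleton]

lemma forall_ne_iff_of_adj {x y : Fin n → Bool} (h : (Q n).Adj x y) (i : Fin n) :
    x i ≠ y i ↔ (i : ℕ) = dir x y := by
  obtain ⟨j, hj⟩ := Q_adj_iff.1 h
  rw [hj, dir_eq_of_forall_ne_iff hj, Fin.val_inj]

lemma dir_comm (x y : Fin n → Bool) : dir x y = dir y x := by
  simp only [dir, ne_comm]

lemma dir_antip (x y : Fin n → Bool) : dir (antip x) (antip y) = dir x y := by
  simp [dir, antip]

abbrev antipHom : Q n →g Q n where
  toFun := antip
  map_rel' h := (hammingDist_comp (fun _ => not) fun _ => Bool.not_injective).trans h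

@[simp] lemma coe_antipHom : ⇑(antipHom : Q n →g Q n) = antip := rfl

@[simp] lemma dirs_cons {u v w : Fin n → Bool} (h : (Q n).Adj u v) (p : (Q n).Walk v w) :
    dirs (.cons h p) = dir u v :: dirs p := rfl

@[simp] lemma dirs_append {u v w : Fin n → Bool} (p : (Q n).Walk u v) (q : (Q n).Walk v w) :
    dirs (p.append q) = dirs p ++ dirs q := by
  simp [dirs, Walk.darts_append]

@[simp] lemma dirs_copy {u v u' v' : Fin n → Bool} (p : (Q n).Walk u v) (hu : u = u')
    (hv : v = v') : dirs (p.copy hu hv) = dirs p := by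
  subst hu hv; rfl

@[simp] lemma dirs_reverse {u v : Fin n → Bool} (p : (Q n).Walk u v) :
    dirs p.reverse = (dirs p).reverse := by
  simp [dirs, Walk.darts_reverse, List.map_reverse, Function.comp_def, dir_comm]

@[simp] lemma dirs_map_antipHom {u v : Fin n → Bool} (p : (Q n).Walk u v) :
    dirs (p.map antipHom) = dirs p := by
  rw [dirs, Walk.darts_map, List.map_map]
  exact List.map_congr_left fun d _ => dir_antip d.fst d.snd

lemma apply_eq_of_mem_support_of_notMem_dirs {u v w : Fin n → Bool} {p : (Q n).Walk u v}
    {i : Fin n} (hi : (i : ℕ) ∉ dirs p) (hw : w ∈ p.support) : w i = u i := by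
  induction p with
  | nil => simp_all
  | cons h q ih =>
    simp only [dirs_cons, List.mem_cons, not_or] at hi
    rcases List.mem_cons.1 hw with rfl | hw
    · rfl
    · rw [ih hi.2 hw, not_not.1 (mt (forall_ne_iff_of_adj h i).1 hi.1)]

lemma apply_eq_of_notMem_dirs {u v : Fin n → Bool} (p : (Q n).Walk u v) {i : Fin n}
    (hi : (i : ℕ) ∉ dirs p) : u i = v i :=
  (apply_eq_of_mem_support_of_notMem_dirs hi p.end_mem_support).symm

lemma mem_dirs_of_apply_ne {u v : Fin n → Bool} (p : (Q n).Walk u v) {i : Fin n}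
    (hi : u i ≠ v i) : (i : ℕ) ∈ dirs p :=
  not_not.1 (mt (apply_eq_of_notMem_dirs p) hi)

lemma isGeodesic_iff_nodup_dirs {u v : Fin n → Bool} {p : (Q n).Walk u v} :
    IsGeodesic p ↔ (dirs p).Nodup := by
  refine ⟨And.right, fun h => ⟨?_, h⟩⟩
  induction p with
  | nil => exact .nil
  | @cons u w v hadj q ih =>
    rw [dirs_cons, List.nodup_cons] at h
    refine (ih h.2).cons fun hu => ?_
    obtain ⟨j, hj⟩ := Q_adj_iff.1 hadj
    have hj' : (j : ℕ) ∉ dirs q := dir_eq_of_forall_ne_iff hj ▸ h.1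
    exact (hj j).2 rfl (apply_eq_of_mem_support_of_notMem_dirs hj' hu)

lemma exists_eq_append_cons_of_mem_dirs {u v : Fin n → Bool} {p : (Q n).Walk u v}
    {d : ℕ} (hd : d ∈ dirs p) :
    ∃ (w w' : Fin n → Bool) (p₁ : (Q n).Walk u w) (h : (Q n).Adj w w')
      (p₂ : (Q n).Walk w' v), p = p₁.append (.cons h p₂) ∧ dir w w' = d := by
  induction p with
  | nil => simp [dirs] at hd
  | @cons u x v h q ih =>
    by_cases hux : dir u x = d
    · exact ⟨u, x, .nil, h, q, rfl, hux⟩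
    · obtain ⟨w, w', p₁, h', p₂, rfl, hdir⟩ :=
        ih ((List.mem_cons.1 hd).resolve_left (Ne.symm hux))
      exact ⟨w, w', .cons h p₁, h', p₂, rfl, hdir⟩

lemma exists_geodesic_changesAtMostOnce_of_append {c : Sym2 (Fin n → Bool) → Bool}
    {b : Bool} {x y y' z : Fin n → Bool} (p : (Q n).Walk x y) (q : (Q n).Walk y' z)
    (hy : y = y') (hz : z = antip x) (hdirs : (dirs p ++ dirs q).Nodup)
    (hp : ∀ e ∈ p.edges, c e = b) (hq : ∀ e ∈ q.edges, c e = !b) :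
    ∃ (u : Fin n → Bool) (r : (Q n).Walk u (antip u)),
      IsGeodesic r ∧ ChangesAtMostOnce c r := by
  subst hy hz
  exact ⟨x, p.append q, isGeodesic_iff_nodup_dirs.2 (by rwa [dirs_append]),
    p.edges, q.edges, b, Walk.edges_append .., hp, hq⟩

lemma exists_mono_geodesic_apply_eq_false {c : Sym2 (Fin n → Bool) → Bool}
    {U : Fin n → Bool} {P : (Q n).Walk U (antip U)} (hP : IsGeodesic P) (hmono : Mono c P)
    (i : Fin n) :
    ∃ (V : Fin n → Bool) (P' : (Q n).Walk V (antip V)),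
      V i = false ∧ IsGeodesic P' ∧ Mono c P' := by
  cases hU : U i
  · exact ⟨U, P, hU, hP, hmono⟩
  · refine ⟨antip U, P.reverse.copy rfl (antip_antip U).symm, by simp [antip, hU], ?_, ?_⟩
    · rw [isGeodesic_iff_nodup_dirs] at hP ⊢
      simpa using hP
    · obtain ⟨b, hb⟩ := hmono
      exact ⟨b, by simpa using hb⟩

end Hypercube

section AntipodalColouring

variable {n : ℕ} {c : Sym2 (Fin n → Bool) → Bool}

lemma IsAntipodalColouring.apply_map_antip (hc : IsAntipodalColouring n c)
    {e : Sym2 (Fin n → Bool)} (he : e ∈ (Q n).edgeSet) : c (e.map antip) = !c e := by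
  induction e using Sym2.ind with
  | _ x y => exact Bool.eq_not_iff.2 (hc x y he).symm

theorem exists_mono_geodesic_of_changesAtMostOnce (hc : IsAntipodalColouring n c)
    {u : Fin n → Bool} {p : (Q n).Walk u (antip u)} (hp : IsGeodesic p)
    (hpc : ChangesAtMostOnce c p) :
    ∃ (v : Fin n → Bool) (q : (Q n).Walk v (antip v)), IsGeodesic q ∧ Mono c q := by
  obtain ⟨l₁, l₂, b, hl, h₁, h₂⟩ := hpc
  set k := l₁.length
  have hdirs : dirs p = dirs (p.take k) ++ dirs (p.drop k) := by
    rw [← dirs_append, Walk.append_take_drop_eq]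
  have htake : (p.take k).edges = l₁ := by rw [Walk.edges_take, hl, List.take_left]
  have hdrop : (p.drop k).edges = l₂ := by rw [Walk.edges_drop, hl, List.drop_left]
  refine ⟨p.getVert k, (p.drop k).append ((p.take k).map antipHom), ?_, !b, ?_⟩
  · rw [isGeodesic_iff_nodup_dirs, hdirs] at hp
    rw [isGeodesic_iff_nodup_dirs, dirs_append, dirs_map_antipHom]
    exact List.nodup_append_comm.1 hp
  · simp only [Walk.edges_append, Walk.edges_map, coe_antipHom, List.mem_append, List.mem_map,
      hdrop, htake]
    rintro _ (he | ⟨e, he, rfl⟩)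
    · exact h₂ _ he
    · have he' : e ∈ (Q n).edgeSet := p.edges_subset_edgeSet (hl ▸ List.mem_append_left _ he)
      rw [hc.apply_map_antip he', h₁ e he]

end AntipodalColouring

section Extension

variable {n : ℕ} (c : Sym2 (Fin n → Bool) → Bool)

@[simp] lemma init_antip (x : Fin (n + 1) → Bool) :
    Fin.init (antip x) = antip (Fin.init x) := rfl

/-- Edges between the layers get the common coordinate `0` of their endpoints, on which
antipodal edges disagree when `n ≠ 0`. -/
def antipodalExtension : Sym2 (Fin (n + 1) → Bool) → Bool :=
  Sym2.lift ⟨fun x y =>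
    if x (Fin.last n) = y (Fin.last n) then
      if x (Fin.last n) then !c s(antip (Fin.init x), antip (Fin.init y))
      else c s(Fin.init x, Fin.init y)
    else x 0 && y 0, fun x y => by
      dsimp only
      by_cases h : x (Fin.last n) = y (Fin.last n)
      · rw [if_pos h, if_pos h.symm, h]
        split <;> rw [Sym2.eq_swap]
      · simp only [if_neg h, if_neg (Ne.symm h), Bool.and_comm]⟩

lemma antipodalExtension_of_forall_last_false {e : Sym2 (Fin (n + 1) → Bool)}
    (he : ∀ x ∈ e, x (Fin.last n) = false) : antipodalExtension c e = c (e.map Fin.init) := by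
  induction e using Sym2.ind with
  | _ x y => simp [antipodalExtension, he x (by simp), he y (by simp)]

lemma antipodalExtension_of_forall_last_true {e : Sym2 (Fin (n + 1) → Bool)}
    (he : ∀ x ∈ e, x (Fin.last n) = true) :
    antipodalExtension c e = !c (e.map (antip ∘ Fin.init)) := by
  induction e using Sym2.ind with
  | _ x y => simp [antipodalExtension, he x (by simp), he y (by simp)]

lemma isAntipodalColouring_antipodalExtension (hn : n ≠ 0) :
    IsAntipodalColouring (n + 1) (antipodalExtension c) := by
  intro x y h
  by_cases hxy : x (Fin.last n) = y (Fin.last n)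
  · cases hx : x (Fin.last n) <;> simp [antipodalExtension, antip, ← hxy, hx]
  · have h0 : x 0 = y 0 := by
      by_contra h0
      have := ((forall_ne_iff_of_adj h 0).1 h0).trans ((forall_ne_iff_of_adj h _).1 hxy).symm
      simp at this
      omega
    simp [antipodalExtension, antip, hxy, h0]

lemma adj_init_of_dir_ne {x y : Fin (n + 1) → Bool} (h : (Q (n + 1)).Adj x y)
    (hd : dir x y ≠ n) :
    (Q n).Adj (Fin.init x) (Fin.init y) ∧ dir (Fin.init x) (Fin.init y) = dir x y := by
  obtain ⟨j, hj⟩ := Q_adj_iff.1 h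
  have hjd := dir_eq_of_forall_ne_iff hj
  obtain ⟨i, rfl⟩ :=
    Fin.exists_castSucc_eq (i := j) |>.2 fun hjn => hd (by rw [hjd, hjn, Fin.val_last])
  have hi : ∀ k, Fin.init x k ≠ Fin.init y k ↔ k = i :=
    fun k => (hj k.castSucc).trans Fin.castSucc_inj
  exact ⟨Q_adj_iff.2 ⟨i, hi⟩, by rw [dir_eq_of_forall_ne_iff hi, hjd, Fin.val_castSucc]⟩

lemma init_eq_of_dir_eq {x y : Fin (n + 1) → Bool} (h : (Q (n + 1)).Adj x y)
    (hd : dir x y = n) : Fin.init x = Fin.init y :=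
  funext fun i => not_not.1 fun hi => by
    have := (forall_ne_iff_of_adj h _).1 hi
    simp only [Fin.val_castSucc, hd] at this
    exact i.isLt.ne this

lemma exists_walk_init {u v : Fin (n + 1) → Bool} (P : (Q (n + 1)).Walk u v)
    (hP : n ∉ dirs P) : ∃ q : (Q n).Walk (Fin.init u) (Fin.init v),
      dirs q = dirs P ∧ q.edges = P.edges.map (Sym2.map Fin.init) := by
  induction P with
  | nil => exact ⟨.nil, rfl, rfl⟩
  | cons h P ih =>
    simp only [dirs_cons, List.mem_cons, not_or] at hP
    obtain ⟨q, hqd, hqe⟩ := ih hP.2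
    obtain ⟨hadj, hdir⟩ := adj_init_of_dir_ne h (Ne.symm hP.1)
    exact ⟨.cons hadj q, by simp [hqd, hdir], by simp [hqe]⟩

lemma exists_walk_of_lower_layer {b : Bool} {u v : Fin (n + 1) → Bool}
    (P : (Q (n + 1)).Walk u v) (hP : n ∉ dirs P) (hu : u (Fin.last n) = false)
    (hb : ∀ e ∈ P.edges, antipodalExtension c e = b) :
    ∃ q : (Q n).Walk (Fin.init u) (Fin.init v),
      dirs q = dirs P ∧ ∀ e ∈ q.edges, c e = b := by
  obtain ⟨q, hqd, hqe⟩ := exists_walk_init P hP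
  refine ⟨q, hqd, ?_⟩
  simp only [hqe, List.mem_map]
  rintro _ ⟨e, he, rfl⟩
  rw [← hb e he, antipodalExtension_of_forall_last_false c fun x hx =>
    (apply_eq_of_mem_support_of_notMem_dirs hP (P.mem_support_of_mem_edges he hx)).trans hu]

lemma exists_walk_of_upper_layer {b : Bool} {u v : Fin (n + 1) → Bool}
    (P : (Q (n + 1)).Walk u v) (hP : n ∉ dirs P) (hu : u (Fin.last n) = true)
    (hb : ∀ e ∈ P.edges, antipodalExtension c e = b) :
    ∃ q : (Q n).Walk (antip (Fin.init u)) (antip (Fin.init v)),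
      dirs q = dirs P ∧ ∀ e ∈ q.edges, c e = !b := by
  obtain ⟨q, hqd, hqe⟩ := exists_walk_init P hP
  refine ⟨q.map antipHom, by rw [dirs_map_antipHom, hqd], ?_⟩
  simp only [Walk.edges_map, hqe, List.map_map, List.mem_map]
  rintro _ ⟨e, he, rfl⟩
  rw [← hb e he, antipodalExtension_of_forall_last_true c fun x hx =>
    (apply_eq_of_mem_support_of_notMem_dirs hP (P.mem_support_of_mem_edges he hx)).trans hu]
  simp [Sym2.map_map]

theorem exists_changesAtMostOnce_of_mono_antipodalExtension {U : Fin (n + 1) → Bool}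
    (hU : U (Fin.last n) = false) {P : (Q (n + 1)).Walk U (antip U)} (hP : IsGeodesic P)
    (hmono : Mono (antipodalExtension c) P) :
    ∃ (u : Fin n → Bool) (p : (Q n).Walk u (antip u)),
      IsGeodesic p ∧ ChangesAtMostOnce c p := by
  obtain ⟨b, hb⟩ := hmono
  obtain ⟨w, w', P₁, hww', P₂, rfl, hdir⟩ :=
    exists_eq_append_cons_of_mem_dirs <|
      mem_dirs_of_apply_ne P (i := Fin.last n) (by simp [antip])
  rw [isGeodesic_iff_nodup_dirs, dirs_append, dirs_cons, hdir, List.nodup_middle,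
    List.nodup_cons, List.mem_append, not_or] at hP
  obtain ⟨⟨hn₁, hn₂⟩, hnodup⟩ := hP
  simp only [Walk.edges_append, Walk.edges_cons, List.mem_append, List.mem_cons] at hb
  have hw' : w' (Fin.last n) = true := by
    rw [apply_eq_of_notMem_dirs P₂ hn₂]
    simp [antip, hU]
  obtain ⟨q₁, hq₁d, hq₁c⟩ :=
    exists_walk_of_lower_layer c P₁ hn₁ hU fun e he => hb e (.inl he)
  obtain ⟨q₂, hq₂d, hq₂c⟩ :=
    exists_walk_of_upper_layer c P₂ hn₂ hw' fun e he => hb e (.inr (.inr he))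
  refine exists_geodesic_changesAtMostOnce_of_append q₂ q₁ (by simp)
    (by simp [init_eq_of_dir_eq hww' hdir]) ?_ hq₂c (by simpa using hq₁c)
  rw [hq₁d, hq₂d]
  exact List.nodup_append_comm.1 hnodup

end Extension

/-- Statement A holds (for all `n`) if and only if Statement B holds (for all `n`). -/
theorem stmt12 : StatementA ↔ StatementB := by
  refine ⟨fun hA n hn c => ?_, fun hB n hn c hc => ?_⟩
  · obtain ⟨U, P, hP, hmono⟩ := hA (n + 1) (by omega) (antipodalExtension c)
      (isAntipodalColouring_antipodalExtension c (by omega))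
    obtain ⟨V, P', hV, hP', hmono'⟩ := exists_mono_geodesic_apply_eq_false hP hmono (Fin.last n)
    exact exists_changesAtMostOnce_of_mono_antipodalExtension c hV hP' hmono'
  · obtain ⟨u, p, hp, hpc⟩ := hB n hn c
    exact exists_mono_geodesic_of_changesAtMostOnce hc hp hpc
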